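/- Let N > 1 and x ∈ MAW^ℓ(y₁#…#y_N) with x ∉ MAW^ℓ(y₁#…#y_{N−1}) ∪ MAW^ℓ(y_N), |x| = m ≥ 2. Then exactly one of the following holds: x[0..m−2] is a factor of y₁#…#y_{N−1} but not of y_N and x[1..m−1] is a factor of y_N but not of y₁#…#y_{N−1}; or symmetrically with the roles of y₁#…#y_{N−1} and y_N swapped. -/
import Mathlib


/-- `x` is a minimal absent word (MAW) of `y`: `x` is not a factor of `y`,
but every proper factor of `x` is a factor of `y`. -/
def MAW {α : Type*} (y x : List α) : Prop :=
  ¬ x <:+: y ∧ ∀ f : List α, f <:+: x → f ≠ x → f <:+: y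

/-- MAW of length at most `ℓ`. -/
def MAWle {α : Type*} (ℓ : ℕ) (y x : List α) : Prop :=
  MAW y x ∧ x.length ≤ ℓ

/-- Reduced set: MAWs of `u` (length ≤ ℓ) containing no MAW of `v` (length ≤ ℓ) as a factor. -/
def RMAW {α : Type*} (ℓ : ℕ) (u v x : List α) : Prop :=
  MAWle ℓ u x ∧ ∀ w : List α, MAWle ℓ v w → ¬ w <:+: x

lemma infix_split {α : Type*} (hash : α) (u v t : List α) (ht : hash ∉ t)
    (h : t <:+: u ++ [hash] ++ v) : t <:+: u ∨ t <:+: v := by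
  obtain ⟨a, b, hab⟩ := h
  have hlen : a.length + (t.length + b.length) = u.length + (v.length + 1) := by
    simpa using congrArg List.length hab
  by_cases h1 : a.length + t.length ≤ u.length
  · left
    have h2 : a ++ t <+: a ++ t ++ b := by simp
    have h3 : u <+: a ++ t ++ b := by
      rw [hab]; exact (List.prefix_append u ([hash] ++ v)).trans (by simp [List.append_assoc])
    have := List.prefix_of_prefix_length_le h2 h3 (by simpa using h1)
    exact ((List.suffix_append a t).isInfix).trans this.isInfix
  · by_cases h2 : u.length + 1 ≤ a.length
    · right
      have h3 : t ++ b <:+ a ++ t ++ b := by simp [List.append_assoc]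
      have h4 : v <:+ a ++ t ++ b := by
        rw [hab]; exact ⟨u ++ [hash], by simp⟩
      have hl : (t ++ b).length ≤ v.length := by simp; omega
      have := List.suffix_of_suffix_length_le h3 h4 hl
      exact ((List.prefix_append t b).isInfix).trans this.isInfix
    · exfalso
      push_neg at h1 h2
      have e1 : (u ++ ([hash] ++ v))[u.length]? = some hash := by
        rw [List.getElem?_append_right (le_refl _)]
        simp
      have e2 : (a ++ (t ++ b))[u.length]? = t[u.length - a.length]? := by
        rw [List.getElem?_append_right (by omega)]
        rw [List.getElem?_append_left (by omega)]
      have e3 : (a ++ (t ++ b)) = u ++ ([hash] ++ v) := by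
        simpa [List.append_assoc] using hab
      rw [e3, e1] at e2
      obtain ⟨hk, hv⟩ := List.getElem?_eq_some_iff.mp e2.symm
      exact ht (hv ▸ List.getElem_mem hk)

lemma proper_factor_split {α : Type*} {x f : List α} (h : f <:+: x) (hne : f ≠ x) :
    f <:+: x.dropLast ∨ f <:+: x.tail := by
  obtain ⟨a, b, hab⟩ := h
  rcases b.eq_nil_or_concat with rfl | ⟨b', c, rfl⟩
  · -- b = [], so f is a suffix; a ≠ []
    rcases a with _ | ⟨d, a'⟩
    · simp at hab; exact absurd hab hne
    · right
      refine ⟨a', [], ?_⟩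
      have : x.tail = a' ++ f := by rw [← hab]; simp
      simp [this]
  · left
    refine ⟨a, b', ?_⟩
    rw [← hab, List.concat_eq_append]
    rw [show a ++ f ++ (b' ++ [c]) = (a ++ f ++ b') ++ [c] by simp [List.append_assoc]]
    simp

lemma intercalate_concat {α : Type*} (s a : List α) (l : List (List α)) (h : l ≠ []) :
    List.intercalate s (l ++ [a]) = List.intercalate s l ++ s ++ a := by
  induction l with
  | nil => simp at h
  | cons b t ih =>
    cases t with
    | nil => simp [List.intercalate]
    | cons c s' =>
      simp only [List.intercalate, List.cons_append, List.intersperse] at *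
      simp_all
theorem incremental_case_dichotomy {α : Type*} (S : Set α) (hash : α)
    (hhash : hash ∉ S) (ys : List (List α)) (hne : ys ≠ [])
    (hN : 2 ≤ ys.length) (hS : ∀ w ∈ ys, ∀ a ∈ w, a ∈ S)
    (ℓ : ℕ) (x : List α) (hxS : ∀ a ∈ x, a ∈ S) (hm : 2 ≤ x.length)
    (hx : MAWle ℓ (List.intercalate [hash] ys) x)
    (h₁ : ¬ MAWle ℓ (List.intercalate [hash] ys.dropLast) x)
    (h₂ : ¬ MAWle ℓ (ys.getLast hne) x) :
    Xor'
      (x.dropLast <:+: List.intercalate [hash] ys.dropLast ∧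
        ¬ x.dropLast <:+: ys.getLast hne ∧
        x.tail <:+: ys.getLast hne ∧
        ¬ x.tail <:+: List.intercalate [hash] ys.dropLast)
      (x.dropLast <:+: ys.getLast hne ∧
        ¬ x.dropLast <:+: List.intercalate [hash] ys.dropLast ∧
        x.tail <:+: List.intercalate [hash] ys.dropLast ∧
        ¬ x.tail <:+: ys.getLast hne) := by
  set u := List.intercalate [hash] ys.dropLast with hu
  set v := ys.getLast hne with hv
  have hdne : ys.dropLast ≠ [] := by
    intro h
    have := congrArg List.length h
    simp at this
    omega
  have hw : List.intercalate [hash] ys = u ++ [hash] ++ v := by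
    conv_lhs => rw [← List.dropLast_append_getLast hne]
    exact intercalate_concat _ _ _ hdne
  have hxne : x ≠ [] := by intro h; simp [h] at hm
  have hashx : hash ∉ x := fun h => hhash (hxS _ h)
  -- proper factors of x
  have hdprop : x.dropLast ≠ x := by
    intro h
    have := congrArg List.length h
    rw [List.length_dropLast] at this
    omega
  have htprop : x.tail ≠ x := by
    intro h
    have := congrArg List.length h
    rw [List.length_tail] at this
    omega
  have hd : x.dropLast <:+: u ++ [hash] ++ v := by
    rw [← hw]; exact hx.1.2 _ (x.dropLast_prefix).isInfix hdprop
  have ht : x.tail <:+: u ++ [hash] ++ v := by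
    rw [← hw]; exact hx.1.2 _ (x.tail_suffix).isInfix htprop
  have hsplit_d : x.dropLast <:+: u ∨ x.dropLast <:+: v :=
    infix_split hash u v _ (fun h => hashx ((x.dropLast_prefix).subset h)) hd
  have hsplit_t : x.tail <:+: u ∨ x.tail <:+: v :=
    infix_split hash u v _ (fun h => hashx ((x.tail_suffix).subset h)) ht
  have hxu : ¬ x <:+: u := by
    intro h
    exact hx.1.1 (hw ▸ h.trans ((List.prefix_append u ([hash] ++ v)).trans
      (by simp [List.append_assoc])).isInfix)
  have hxv : ¬ x <:+: v := by
    intro h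
    refine hx.1.1 (hw ▸ h.trans ?_)
    exact (List.suffix_append ([hash]) v).isInfix.trans
      (List.suffix_append (u) ([hash] ++ v)).isInfix |>.trans (by simp [List.append_assoc])
  have notboth_u : ¬ (x.dropLast <:+: u ∧ x.tail <:+: u) := by
    rintro ⟨h1, h2⟩
    exact h₁ ⟨⟨hxu, fun f hf hfe =>
      (proper_factor_split hf hfe).elim (·.trans h1) (·.trans h2)⟩, hx.2⟩
  have notboth_v : ¬ (x.dropLast <:+: v ∧ x.tail <:+: v) := by
    rintro ⟨h1, h2⟩
    exact h₂ ⟨⟨hxv, fun f hf hfe =>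
      (proper_factor_split hf hfe).elim (·.trans h1) (·.trans h2)⟩, hx.2⟩
  unfold Xor'
  tauto
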